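/- If Γ ⊢_{HWFI} A then Γ ⊢_{NWFI} A, and conversely if Γ ⊢_{NWFI} A then Γ ⊢_{HWFI} A; that is, the restricted Hilbert system WFI and the natural deduction system NWFI derive the same formulas from any set of assumptions Γ. -/

import Mathlib

/-- Formulas of subintuitionistic propositional logic. -/
inductive Fml : Type
  | atom : ℕ → Fml
  | bot  : Fml
  | and  : Fml → Fml → Fml
  | or   : Fml → Fml → Fml
  | imp  : Fml → Fml → Fml
deriving DecidableEq

/-- `A ↔ B` abbreviates `(A → B) ∧ (B → A)`. -/
def Fml.biimp (A B : Fml) : Fml := (A.imp B).and (B.imp A)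

/-- The extra axiom schemes / rules among I, C, D, Ĉ, D̂, N, N₂. -/
inductive ExtAx : Type
  | I | C | D | Chat | Dhat | N | N2
deriving DecidableEq

/-- Theorems of the Hilbert system WF extended with the schemes/rules in `E`
(derivations with no assumptions; all rules unrestricted here). -/
inductive HThm (E : Set ExtAx) : Fml → Prop
  | ax1 (A B : Fml)   : HThm E (A.imp (A.or B))
  | ax2 (A B : Fml)   : HThm E (B.imp (A.or B))
  | ax3 (A B : Fml)   : HThm E ((A.and B).imp A)
  | ax4 (A B : Fml)   : HThm E ((A.and B).imp B)
  | ax7 (A B C : Fml) : HThm E ((A.and (B.or C)).imp ((A.and B).or (A.and C)))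
  | ax8 (A : Fml)     : HThm E (A.imp A)
  | ax14 (A : Fml)    : HThm E (Fml.bot.imp A)
  | mp {A B : Fml}    : HThm E A → HThm E (A.imp B) → HThm E B
  | af {A : Fml} (B : Fml) : HThm E A → HThm E (B.imp A)
  | tr {A B C : Fml}  : HThm E (A.imp B) → HThm E (B.imp C) → HThm E (A.imp C)
  | rc {A B C : Fml}  : HThm E (A.imp B) → HThm E (A.imp C) → HThm E (A.imp (B.and C))
  | rd {A B C : Fml}  : HThm E (A.imp C) → HThm E (B.imp C) → HThm E ((A.or B).imp C)
  | conj {A B : Fml}  : HThm E A → HThm E B → HThm E (A.and B)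
  | re {A B C D : Fml} : HThm E (A.biimp B) → HThm E (C.biimp D) →
      HThm E ((A.imp C).biimp (B.imp D))
  | axI (A B C : Fml) : ExtAx.I ∈ E →
      HThm E (((A.imp B).and (B.imp C)).imp (A.imp C))
  | axC (A B C : Fml) : ExtAx.C ∈ E →
      HThm E (((A.imp B).and (A.imp C)).imp (A.imp (B.and C)))
  | axD (A B C : Fml) : ExtAx.D ∈ E →
      HThm E (((A.imp C).and (B.imp C)).imp ((A.or B).imp C))
  | axChat (A B C : Fml) : ExtAx.Chat ∈ E →
      HThm E ((A.imp (B.and C)).imp ((A.imp B).and (A.imp C)))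
  | axDhat (A B C : Fml) : ExtAx.Dhat ∈ E →
      HThm E (((A.or B).imp C).imp ((A.imp C).and (B.imp C)))
  | ruleN {A B C D : Fml} : ExtAx.N ∈ E →
      HThm E (A.imp (B.or C)) → HThm E (C.imp (A.or D)) →
      HThm E ((A.and D).imp B) → HThm E ((C.and B).imp D) →
      HThm E ((A.imp B).biimp (C.imp D))
  | ruleN2 {A B C D : Fml} : ExtAx.N2 ∈ E →
      HThm E (C.imp (A.or D)) → HThm E ((C.and B).imp D) →
      HThm E ((A.imp B).imp (C.imp D))

/-- Restricted derivability from assumptions in the Hilbert system WF + `E`: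
besides assumptions and theorems, only the conjunction rule is unrestricted, and
modus ponens may be used only when the major premise `A → B` is a theorem
(derived with no assumptions); all other rules are confined to theorems. -/
inductive HDer (E : Set ExtAx) (Γ : Set Fml) : Fml → Prop
  | hyp {A : Fml}  : A ∈ Γ → HDer E Γ A
  | thm {A : Fml}  : HThm E A → HDer E Γ A
  | conj {A B : Fml} : HDer E Γ A → HDer E Γ B → HDer E Γ (A.and B)
  | mp {A B : Fml} : HDer E Γ A → HThm E (A.imp B) → HDer E Γ B

/-- Tags for the optional implication-introduction rules of the natural
deduction systems. -/
inductive NRule : Type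
  | impI1 | impI2 | impN | impN2 | impChat | impDhat | impAnd | impOr | impTr
deriving DecidableEq

/-- Natural deduction derivations for the system with optional rules `R`.
`Deriv R Γ A` is a derivation of `A` all of whose open assumptions lie in `Γ`. -/
inductive Deriv (R : Set NRule) : Set Fml → Fml → Type
  | hyp (Γ : Set Fml) (A : Fml) : A ∈ Γ → Deriv R Γ A
  | andI {Γ : Set Fml} {A B : Fml} :
      Deriv R Γ A → Deriv R Γ B → Deriv R Γ (A.and B)
  | andE1 {Γ : Set Fml} {A B : Fml} :
      Deriv R Γ (A.and B) → Deriv R Γ A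
  | andE2 {Γ : Set Fml} {A B : Fml} :
      Deriv R Γ (A.and B) → Deriv R Γ B
  | orI1 {Γ : Set Fml} {A : Fml} (B : Fml) :
      Deriv R Γ A → Deriv R Γ (A.or B)
  | orI2 {Γ : Set Fml} (A : Fml) {B : Fml} :
      Deriv R Γ B → Deriv R Γ (A.or B)
  | orE {Γ : Set Fml} {A B C : Fml} :
      Deriv R Γ (A.or B) → Deriv R (insert A Γ) C → Deriv R (insert B Γ) C →
      Deriv R Γ C
  | botE {Γ : Set Fml} (A : Fml) :
      Deriv R Γ Fml.bot → Deriv R Γ A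
  | impI {Γ : Set Fml} {A B : Fml} :
      Deriv R {A} B → Deriv R Γ (A.imp B)
  | impE {Γ : Set Fml} {A B : Fml} :
      Deriv R Γ A → Deriv R (∅ : Set Fml) (A.imp B) → Deriv R Γ B
  | impI1 {Γ : Set Fml} {A B D : Fml} :
      NRule.impI1 ∈ R → Deriv R {B} D → Deriv R {D} B →
      Deriv R Γ ((A.imp B).imp (A.imp D))
  | impI2 {Γ : Set Fml} {A B D : Fml} :
      NRule.impI2 ∈ R → Deriv R {B} D → Deriv R {D} B →
      Deriv R Γ ((B.imp A).imp (D.imp A))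
  | impIN {Γ : Set Fml} {A B C D : Fml} :
      NRule.impN ∈ R →
      Deriv R {A} (C.or B) → Deriv R {D} B → Deriv R {C} (A.or D) → Deriv R {B} D →
      Deriv R Γ ((A.imp B).imp (C.imp D))
  | impIN2 {Γ : Set Fml} {A B C D : Fml} :
      NRule.impN2 ∈ R →
      Deriv R {C} (A.or D) → Deriv R {B} D →
      Deriv R Γ ((A.imp B).imp (C.imp D))
  | impIChat {Γ : Set Fml} {A B : Fml} (C : Fml) :
      NRule.impChat ∈ R → Deriv R {A} B →
      Deriv R Γ ((C.imp A).imp (C.imp B))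
  | impIDhat {Γ : Set Fml} {A B : Fml} (C : Fml) :
      NRule.impDhat ∈ R → Deriv R {A} B →
      Deriv R Γ ((B.imp C).imp (A.imp C))
  | impIAnd {Γ : Set Fml} {A B C : Fml} :
      NRule.impAnd ∈ R → Deriv R Γ (A.imp B) → Deriv R Γ (A.imp C) →
      Deriv R Γ (A.imp (B.and C))
  | impIOr {Γ : Set Fml} {A B C : Fml} :
      NRule.impOr ∈ R → Deriv R Γ (A.imp C) → Deriv R Γ (B.imp C) →
      Deriv R Γ ((A.or B).imp C)
  | impITr {Γ : Set Fml} {A B C : Fml} :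
      NRule.impTr ∈ R → Deriv R Γ (A.imp B) → Deriv R Γ (B.imp C) →
      Deriv R Γ (A.imp C)

/-- `Γ ⊢ A` in the natural deduction system with optional rules `R`. -/
def NDer (R : Set NRule) (Γ : Set Fml) (A : Fml) : Prop :=
  Nonempty (Deriv R Γ A)

/-- A derivation may serve as the major premise of an elimination rule in a
normal derivation: it is an assumption or ends with an elimination rule
different from ∨E (i.e. ∧E or →E). -/
def Deriv.MajorOK : ∀ {R : Set NRule} {Γ : Set Fml} {A : Fml}, Deriv R Γ A → Prop
  | _, _, _, .hyp _ _ _ => True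
  | _, _, _, .andE1 _   => True
  | _, _, _, .andE2 _   => True
  | _, _, _, .impE _ _  => True
  | _, _, _, _          => False

/-- A derivation is normal if every major premise of an elimination rule is
either an assumption or the conclusion of an elimination rule different
from ∨E. -/
def Deriv.Normal {R : Set NRule} : ∀ {Γ : Set Fml} {A : Fml}, Deriv R Γ A → Prop
  | _, _, .hyp _ _ _ => True
  | _, _, .andI d e => d.Normal ∧ e.Normal
  | _, _, .andE1 d => d.MajorOK ∧ d.Normal
  | _, _, .andE2 d => d.MajorOK ∧ d.Normal
  | _, _, .orI1 _ d => d.Normal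
  | _, _, .orI2 _ d => d.Normal
  | _, _, .orE d e f => d.MajorOK ∧ d.Normal ∧ e.Normal ∧ f.Normal
  | _, _, .botE _ d => d.Normal
  | _, _, .impI d => d.Normal
  | _, _, .impE d e => e.MajorOK ∧ d.Normal ∧ e.Normal
  | _, _, .impI1 _ d e => d.Normal ∧ e.Normal
  | _, _, .impI2 _ d e => d.Normal ∧ e.Normal
  | _, _, .impIN _ d e f g => d.Normal ∧ e.Normal ∧ f.Normal ∧ g.Normal
  | _, _, .impIN2 _ d e => d.Normal ∧ e.Normal
  | _, _, .impIChat _ _ d => d.Normal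
  | _, _, .impIDhat _ _ d => d.Normal
  | _, _, .impIAnd _ d e => d.Normal ∧ e.Normal
  | _, _, .impIOr _ d e => d.Normal ∧ e.Normal
  | _, _, .impITr _ d e => d.Normal ∧ e.Normal
/-! The Hilbert-to-natural-deduction direction is a direct simulation, axiom I being the
assumption-free form of →_tr I. The converse rests on an abstraction lemma: because modus
ponens from assumptions needs a theorem as major premise, a restricted derivation of `C` from
`Γ ∪ {A}` factors as a theorem `A ∧ G → C` with `G` derivable from `Γ`. This interprets ∨E
(distributing over `A ∨ B`) and →I (with `Γ = ∅`, where `G` becomes a theorem). -/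

namespace HThm

variable {E : Set ExtAx}

theorem and_comm_imp (A B : Fml) : HThm E ((A.and B).imp (B.and A)) :=
  rc (ax4 A B) (ax3 A B)

theorem and_imp_mono_right {A G G' C : Fml} (h : HThm E ((A.and G).imp C))
    (hG : HThm E (G'.imp G)) : HThm E ((A.and G').imp C) :=
  tr (rc (ax3 A G') (tr (ax4 A G') hG)) h

theorem or_and_imp {A B G C : Fml} (hA : HThm E ((A.and G).imp C))
    (hB : HThm E ((B.and G).imp C)) : HThm E (((A.or B).and G).imp C) :=
  tr (and_comm_imp _ _)
    (tr (ax7 G A B) (rd (tr (and_comm_imp G A) hA) (tr (and_comm_imp G B) hB)))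

end HThm

namespace HDer

variable {E : Set ExtAx}

theorem hThm_of_empty {A : Fml} (h : HDer E ∅ A) : HThm E A := by
  induction h with
  | hyp hA => exact absurd hA (Set.notMem_empty _)
  | thm h => exact h
  | conj _ _ ih₁ ih₂ => exact ih₁.conj ih₂
  | mp _ hAB ih => exact ih.mp hAB

theorem abstract {Γ : Set Fml} {A C : Fml} (h : HDer E (insert A Γ) C) :
    ∃ G, HDer E Γ G ∧ HThm E ((A.and G).imp C) := by
  induction h with
  | @hyp C hC =>
    rcases hC with hCA | hC
    · exact ⟨A.imp A, thm (.ax8 A), by subst hCA; exact .ax3 _ _⟩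
    · exact ⟨C, hyp hC, .ax4 A C⟩
  | thm hC => exact ⟨A.imp A, thm (.ax8 A), hC.af _⟩
  | conj _ _ ih₁ ih₂ =>
    obtain ⟨G₁, hG₁, h₁⟩ := ih₁
    obtain ⟨G₂, hG₂, h₂⟩ := ih₂
    exact ⟨G₁.and G₂, hG₁.conj hG₂,
      .rc (h₁.and_imp_mono_right (.ax3 G₁ G₂)) (h₂.and_imp_mono_right (.ax4 G₁ G₂))⟩
  | mp _ hXC ih =>
    obtain ⟨G, hG, h⟩ := ih
    exact ⟨G, hG, h.tr hXC⟩

theorem imp_of_singleton {A B : Fml} (h : HDer E {A} B) : HThm E (A.imp B) := by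
  obtain ⟨G, hG, hAG⟩ := abstract (Γ := ∅) (by simpa using h)
  exact .tr (.rc (.ax8 A) ((hThm_of_empty hG).af A)) hAG

theorem or_elim {Γ : Set Fml} {A B C : Fml} (hAB : HDer E Γ (A.or B))
    (hA : HDer E (insert A Γ) C) (hB : HDer E (insert B Γ) C) : HDer E Γ C := by
  obtain ⟨G₁, hG₁, h₁⟩ := abstract hA
  obtain ⟨G₂, hG₂, h₂⟩ := abstract hB
  exact (hAB.conj (hG₁.conj hG₂)).mp <| HThm.or_and_imp
    (h₁.and_imp_mono_right (.ax3 G₁ G₂)) (h₂.and_imp_mono_right (.ax4 G₁ G₂))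

end HDer

namespace Deriv

variable {R : Set NRule}

def weaken : ∀ {Γ Δ : Set Fml} {A : Fml}, Γ ⊆ Δ → Deriv R Γ A → Deriv R Δ A
  | _, _, _, h, .hyp _ _ hA => .hyp _ _ (h hA)
  | _, _, _, h, .andI d e => .andI (d.weaken h) (e.weaken h)
  | _, _, _, h, .andE1 d => .andE1 (d.weaken h)
  | _, _, _, h, .andE2 d => .andE2 (d.weaken h)
  | _, _, _, h, .orI1 B d => .orI1 B (d.weaken h)
  | _, _, _, h, .orI2 A d => .orI2 A (d.weaken h)
  | _, _, _, h, .orE d e f =>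
    .orE (d.weaken h) (e.weaken (Set.insert_subset_insert h))
      (f.weaken (Set.insert_subset_insert h))
  | _, _, _, h, .botE A d => .botE A (d.weaken h)
  | _, _, _, _, .impI d => .impI d
  | _, _, _, h, .impE d e => .impE (d.weaken h) e
  | _, _, _, _, .impI1 hm d e => .impI1 hm d e
  | _, _, _, _, .impI2 hm d e => .impI2 hm d e
  | _, _, _, _, .impIN hm d e f g => .impIN hm d e f g
  | _, _, _, _, .impIN2 hm d e => .impIN2 hm d e
  | _, _, _, _, .impIChat C hm d => .impIChat C hm d
  | _, _, _, _, .impIDhat C hm d => .impIDhat C hm d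
  | _, _, _, h, .impIAnd hm d e => .impIAnd hm (d.weaken h) (e.weaken h)
  | _, _, _, h, .impIOr hm d e => .impIOr hm (d.weaken h) (e.weaken h)
  | _, _, _, h, .impITr hm d e => .impITr hm (d.weaken h) (e.weaken h)

def ofEmpty {Γ : Set Fml} {A : Fml} (d : Deriv R ∅ A) : Deriv R Γ A :=
  d.weaken (Set.empty_subset Γ)

end Deriv

section Translation

variable {E : Set ExtAx} {R : Set NRule}

theorem NDer.of_hThm (hE : E ⊆ {ExtAx.I}) (hR : NRule.impTr ∈ R) {A : Fml}
    (h : HThm E A) : NDer R ∅ A := by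
  induction h with
  | ax1 A B => exact ⟨.impI (.orI1 B (.hyp _ _ rfl))⟩
  | ax2 A B => exact ⟨.impI (.orI2 A (.hyp _ _ rfl))⟩
  | ax3 A B => exact ⟨.impI (.andE1 (.hyp _ _ rfl))⟩
  | ax4 A B => exact ⟨.impI (.andE2 (.hyp _ _ rfl))⟩
  | ax7 A B C =>
    let conjA {X : Fml} : Deriv R (insert X {A.and (B.or C)}) (A.and X) :=
      .andI (.andE1 (.hyp _ _ (Set.mem_insert_of_mem _ rfl))) (.hyp _ _ (Set.mem_insert _ _))
    exact ⟨.impI (.orE (.andE2 (.hyp _ _ rfl)) (.orI1 _ conjA) (.orI2 _ conjA))⟩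
  | ax8 A => exact ⟨.impI (.hyp _ _ rfl)⟩
  | ax14 A => exact ⟨.impI (.botE A (.hyp _ _ rfl))⟩
  | mp _ _ ihA ihAB =>
    obtain ⟨d⟩ := ihA; obtain ⟨e⟩ := ihAB
    exact ⟨.impE d e⟩
  | af _ _ ih =>
    obtain ⟨d⟩ := ih
    exact ⟨.impI d.ofEmpty⟩
  | tr _ _ ih₁ ih₂ =>
    obtain ⟨d⟩ := ih₁; obtain ⟨e⟩ := ih₂
    exact ⟨.impITr hR d e⟩
  | rc _ _ ih₁ ih₂ =>
    obtain ⟨d⟩ := ih₁; obtain ⟨e⟩ := ih₂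
    exact ⟨.impI (.andI (.impE (.hyp _ _ rfl) d) (.impE (.hyp _ _ rfl) e))⟩
  | rd _ _ ih₁ ih₂ =>
    obtain ⟨d⟩ := ih₁; obtain ⟨e⟩ := ih₂
    exact ⟨.impI (.orE (.hyp _ _ rfl)
      (.impE (.hyp _ _ (Set.mem_insert _ _)) d) (.impE (.hyp _ _ (Set.mem_insert _ _)) e))⟩
  | conj _ _ ih₁ ih₂ =>
    obtain ⟨d⟩ := ih₁; obtain ⟨e⟩ := ih₂
    exact ⟨.andI d e⟩
  | re _ _ ih₁ ih₂ =>
    obtain ⟨d⟩ := ih₁; obtain ⟨e⟩ := ih₂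
    exact ⟨.andI
      (.impI (.impITr hR (.impITr hR d.andE2.ofEmpty (.hyp _ _ rfl)) e.andE1.ofEmpty))
      (.impI (.impITr hR (.impITr hR d.andE1.ofEmpty (.hyp _ _ rfl)) e.andE2.ofEmpty))⟩
  | axI =>
    exact ⟨.impI (.impITr hR (.andE1 (.hyp _ _ rfl)) (.andE2 (.hyp _ _ rfl)))⟩
  | axC _ _ _ hm | axD _ _ _ hm | axChat _ _ _ hm | axDhat _ _ _ hm | ruleN hm | ruleN2 hm =>
    simpa using hE hm

theorem NDer.of_hDer (hE : E ⊆ {ExtAx.I}) (hR : NRule.impTr ∈ R) {Γ : Set Fml} {A : Fml}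
    (h : HDer E Γ A) : NDer R Γ A := by
  induction h with
  | hyp hA => exact ⟨.hyp _ _ hA⟩
  | thm hA =>
    obtain ⟨d⟩ := NDer.of_hThm hE hR hA
    exact ⟨d.ofEmpty⟩
  | conj _ _ ih₁ ih₂ =>
    obtain ⟨d⟩ := ih₁; obtain ⟨e⟩ := ih₂
    exact ⟨.andI d e⟩
  | mp _ hAB ih =>
    obtain ⟨d⟩ := ih
    obtain ⟨e⟩ := NDer.of_hThm hE hR hAB
    exact ⟨.impE d e⟩

theorem HDer.of_deriv (hE : ExtAx.I ∈ E) (hR : R ⊆ {NRule.impTr}) {Γ : Set Fml} {A : Fml}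
    (d : Deriv R Γ A) : HDer E Γ A := by
  induction d with
  | hyp _ _ hA => exact .hyp hA
  | andI _ _ ih₁ ih₂ => exact ih₁.conj ih₂
  | andE1 _ ih => exact ih.mp (.ax3 _ _)
  | andE2 _ ih => exact ih.mp (.ax4 _ _)
  | orI1 _ _ ih => exact ih.mp (.ax1 _ _)
  | orI2 _ _ ih => exact ih.mp (.ax2 _ _)
  | orE _ _ _ ihd ihe ihf => exact ihd.or_elim ihe ihf
  | botE _ _ ih => exact ih.mp (.ax14 _)
  | impI _ ih => exact .thm ih.imp_of_singleton
  | impE _ _ ihd ihe => exact ihd.mp ihe.hThm_of_empty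
  | impITr _ _ _ ih₁ ih₂ => exact (ih₁.conj ih₂).mp (.axI _ _ _ hE)
  | impI1 hm | impI2 hm | impIN hm | impIN2 hm | impIChat _ hm | impIDhat _ hm | impIAnd hm
    | impIOr hm => simpa using hR hm

end Translation

theorem hilbert_iff_natded_WFI (Γ : Set Fml) (A : Fml) :
    HDer ({ExtAx.I} : Set ExtAx) Γ A ↔ NDer {NRule.impTr} Γ A :=
  ⟨NDer.of_hDer Set.Subset.rfl (Set.mem_singleton _),
    fun ⟨d⟩ => HDer.of_deriv (Set.mem_singleton _) Set.Subset.rfl d⟩
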